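/- arXiv:1502.06783 — 3 statements merged into one kernel-verified Lean document; each statement's English description precedes it below -/
import Mathlib

section
/- Let d ∈ ℕ, d ≥ 1, let φ ∈ Φ and let c > 0. Then the set K_c := { γ : γ is a configuration over ℝ^d and ⟨γ × γ, Ψ_φ⟩ ≤ c } is sequentially compact with respect to vague convergence: every sequence in K_c admits a subsequence converging vaguely to some configuration belonging to K_c. -/
/-!
A bound `⟨γ × γ, Ψ_φ⟩ ≤ c` forces the points of `γ` in the ball `B_n` to be `ε_n`-separated, with
`ε_n` depending only on `φ`, `c` and `n`; hence there are at most `N_n` of them. Coding each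
`γ ∩ B_n` by its cardinality and an enumeration puts the sequence into a compact metrizable
product, where a subsequence converges coordinatewise. The limit configuration is the Kuratowski
lower limit of that subsequence: inside each open ball it consists exactly of the limits of the
enumerated points, which remain separated, and this gives local finiteness and vague convergence.
The bound on `⟨γ × γ, Ψ_φ⟩` passes to the limit because `Ψ_φ` is continuous off the diagonal.
-/

open Filter Topology Metric Set Classical

noncomputable section

/-- A configuration over `ℝ^d`: a locally finite subset. -/
def IsConfiguration {d : ℕ} (γ : Set (EuclideanSpace ℝ (Fin d))) : Prop :=
  ∀ K : Set (EuclideanSpace ℝ (Fin d)), IsCompact K → (γ ∩ K).Finite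

/-- Vague convergence of a sequence of configurations: convergence of pairings with
continuous compactly supported test functions. -/
def VagueTendsto {d : ℕ} (γ : ℕ → Set (EuclideanSpace ℝ (Fin d)))
    (γ' : Set (EuclideanSpace ℝ (Fin d))) : Prop :=
  ∀ f : EuclideanSpace ℝ (Fin d) → ℝ, Continuous f → HasCompactSupport f →
    Tendsto (fun k => ∑ᶠ x ∈ γ k, f x) atTop (𝓝 (∑ᶠ x ∈ γ', f x))

/-- The class `Φ` of positive continuous rotation-invariant functions vanishing at infinity. -/
def IsPhi {d : ℕ} (φ : EuclideanSpace ℝ (Fin d) → ℝ) : Prop :=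
  Continuous φ ∧ (∀ x, 0 < φ x) ∧
    (∀ x y : EuclideanSpace ℝ (Fin d), ‖x‖ = ‖y‖ → φ x = φ y) ∧
    (∀ ε > (0 : ℝ), ∃ R : ℝ, ∀ x : EuclideanSpace ℝ (Fin d), R ≤ ‖x‖ → φ x < ε)

/-- `Ψ_φ(x,y) = φ(x)φ(y)(|x-y|+1)/|x-y|` off the diagonal, `0` on the diagonal. -/
def Psi {d : ℕ} (φ : EuclideanSpace ℝ (Fin d) → ℝ) (x y : EuclideanSpace ℝ (Fin d)) : ℝ :=
  if x = y then 0 else φ x * φ y * (dist x y + 1) / dist x y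

/-- `⟨γ × γ, Ψ_φ⟩ ∈ [0,∞]`: the sum of `Ψ_φ` over all pairs of distinct points of `γ`. -/
def pairPsi {d : ℕ} (φ : EuclideanSpace ℝ (Fin d) → ℝ)
    (γ : Set (EuclideanSpace ℝ (Fin d))) : ENNReal :=
  ∑' p : (γ ×ˢ γ : Set (EuclideanSpace ℝ (Fin d) × EuclideanSpace ℝ (Fin d))),
    ENNReal.ofReal (Psi φ p.1.1 p.1.2)

def kuratowskiLiminf {X : Type*} [TopologicalSpace X] (A : ℕ → Set X) : Set X :=
  {x | ∃ a : ℕ → X, (∀ᶠ k in atTop, a k ∈ A k) ∧ Tendsto a atTop (𝓝 x)}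

lemma IsCompact.exists_nat_subset_ball {X : Type*} [PseudoMetricSpace X] {K : Set X}
    (hK : IsCompact K) (x : X) : ∃ n : ℕ, K ⊆ ball x n := by
  obtain ⟨r, hr⟩ := hK.isBounded.subset_ball x
  obtain ⟨n, hn⟩ := exists_nat_gt r
  exact ⟨n, hr.trans (ball_subset_ball hn.le)⟩

lemma TotallyBounded.exists_encard_le_of_isSeparated {X : Type*} [PseudoEMetricSpace X]
    {S : Set X} (hS : TotallyBounded S) {ε : NNReal} (hε : ε ≠ 0) :
    ∃ N : ℕ, ∀ C ⊆ S, IsSeparated ε C → C.encard ≤ N := by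
  obtain ⟨T, -, hT, hcover⟩ :=
    exists_finite_isCover_of_totallyBounded (ε := ε / 2) (by simpa using hε) hS
  refine ⟨T.ncard, fun C hCS hC => ?_⟩
  calc C.encard ≤ packingNumber (2 * (ε / 2)) S := by
        rw [mul_div_cancel₀ ε two_ne_zero]
        exact hC.encard_le_packingNumber hCS
    _ ≤ externalCoveringNumber (ε / 2) S := packingNumber_two_mul_le_externalCoveringNumber _ _
    _ ≤ T.encard := hcover.externalCoveringNumber_le_encard
    _ = T.ncard := hT.cast_ncard_eq.symm

lemma Set.Finite.exists_bijOn_Iio_ncard {X : Type*} {s B : Set X} (hs : s.Finite) (hsB : s ⊆ B)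
    {x₀ : X} (hx₀ : x₀ ∈ B) : ∃ e : ℕ → X, BijOn e (Iio s.ncard) s ∧ ∀ j, e j ∈ B := by
  have hcard : hs.toFinset.card = s.ncard := (ncard_eq_toFinset_card s hs).symm
  let enum : Fin s.ncard ≃ s := (finCongr hcard.symm).trans (hs.toFinset.equivFin.symm.trans
    (Equiv.subtypeEquivRight fun _ => hs.mem_toFinset))
  refine ⟨fun j => if h : j < s.ncard then enum ⟨j, h⟩ else x₀, ⟨?_, ?_, ?_⟩, ?_⟩
  · intro j hj
    simp only [mem_Iio.1 hj, dif_pos]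
    exact (enum _).2
  · intro i hi j hj hij
    simp only [mem_Iio.1 hi, mem_Iio.1 hj, dif_pos] at hij
    simpa using enum.injective (Subtype.ext hij)
  · intro x hx
    refine ⟨enum.symm ⟨x, hx⟩, (enum.symm ⟨x, hx⟩).2, ?_⟩
    simp
  · intro j
    dsimp only
    split_ifs
    exacts [hsB (enum _).2, hx₀]

lemma finsum_mem_eq_sum_range_of_bijOn {X M : Type*} [AddCommMonoid M] {s : Set X} {m : ℕ}
    {e : ℕ → X} (he : BijOn e (Iio m) s) (f : X → M) :
    ∑ᶠ x ∈ s, f x = ∑ j ∈ Finset.range m, f (e j) := by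
  rw [← he.image_eq, finsum_mem_image he.injOn, ← finsum_mem_coe_finset, Finset.coe_range]

/-- Each trace `A k ∩ B n` is coded by its cardinality and an enumeration; these codes lie in a
compact metrizable product, where Tychonoff provides a convergent subsequence. -/
lemma exists_subseq_bijOn_tendsto {X : Type*} [TopologicalSpace X] [FirstCountableTopology X]
    {A B : ℕ → Set X} (hB : ∀ n, IsCompact (B n)) {x₀ : X} (hx₀ : ∀ n, x₀ ∈ B n) {N : ℕ → ℕ}
    (hA : ∀ k n, (A k ∩ B n).encard ≤ N n) :
    ∃ ψ : ℕ → ℕ, StrictMono ψ ∧ ∃ (m : ℕ → ℕ) (e : ℕ → ℕ → ℕ → X) (q : ℕ → ℕ → X),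
      (∀ n, ∀ᶠ k in atTop, BijOn (e k n) (Iio (m n)) (A (ψ k) ∩ B n)) ∧
      ∀ n j, Tendsto (fun k => e k n j) atTop (𝓝 (q n j)) := by
  have hfin : ∀ k n, (A k ∩ B n).Finite := fun k n => finite_of_encard_le_coe (hA k n)
  choose enum henum hB' using fun k n =>
    (hfin k n).exists_bijOn_Iio_ncard inter_subset_right (hx₀ n)
  let code : ℕ → ∀ _ : ℕ, ℕ × (ℕ → X) := fun k n => ((A k ∩ B n).ncard, enum k n)
  have hcode : ∀ k, code k ∈ univ.pi fun n => Iic (N n) ×ˢ univ.pi fun _ => B n := by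
    exact fun k n _ => ⟨Nat.cast_le.1 ((hfin k n).cast_ncard_eq ▸ hA k n), fun j _ => hB' k n j⟩
  obtain ⟨L, -, ψ, hψ, hL⟩ := (isCompact_univ_pi fun n =>
    (finite_Iic (N n)).isCompact.prod (isCompact_univ_pi fun _ => hB n)).tendsto_subseq hcode
  refine ⟨ψ, hψ, fun n => (L n).1, fun k => enum (ψ k), fun n => (L n).2, fun n => ?_,
    fun n j => tendsto_pi_nhds.1 (tendsto_pi_nhds.1 hL n).snd_nhds j⟩
  have hcard : ∀ᶠ k in atTop, (A (ψ k) ∩ B n).ncard = (L n).1 := by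
    simpa [nhds_discrete] using (tendsto_pi_nhds.1 hL n).fst_nhds
  filter_upwards [hcard] with k hk
  exact hk ▸ henum (ψ k) n

section Trace

variable {X : Type*} {A : ℕ → Set X} {B : Set X} {m : ℕ} {e : ℕ → ℕ → X} {q : ℕ → X}

lemma image_subset_kuratowskiLiminf [TopologicalSpace X]
    (he : ∀ᶠ k in atTop, BijOn (e k) (Iio m) (A k ∩ B))
    (hq : ∀ j, Tendsto (fun k => e k j) atTop (𝓝 (q j))) :
    q '' Iio m ⊆ kuratowskiLiminf A := by
  rintro _ ⟨j, hj, rfl⟩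
  exact ⟨fun k => e k j, he.mono fun k hk => (hk.mapsTo hj).1, hq j⟩

lemma kuratowskiLiminf_inter_interior_subset_image [TopologicalSpace X] [T2Space X]
    (he : ∀ᶠ k in atTop, BijOn (e k) (Iio m) (A k ∩ B))
    (hq : ∀ j, Tendsto (fun k => e k j) atTop (𝓝 (q j))) :
    kuratowskiLiminf A ∩ interior B ⊆ q '' Iio m := by
  rintro x ⟨⟨a, haA, ha⟩, hxB⟩
  have hcover : ∀ᶠ k in atTop, ∃ j ∈ Iio m, e k j = a k := by
    filter_upwards [he, haA, ha (mem_interior_iff_mem_nhds.1 hxB)] with k hk hkA hkB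
    exact hk.surjOn ⟨hkA, hkB⟩
  -- pigeonhole: one of the finitely many indices hits `a k` infinitely often
  obtain ⟨j, hj, hfreq⟩ : ∃ j ∈ Iio m, ∃ᶠ k in atTop, e k j = a k := by
    by_contra! hnot
    obtain ⟨k, ⟨j, hj, hjk⟩, hk⟩ :=
      (hcover.and ((finite_Iio m).eventually_all.2 hnot)).exists
    exact hk j hj hjk
  exact ⟨j, hj, tendsto_nhds_unique_of_frequently_eq (hq j) ha hfreq⟩

lemma injOn_of_eventually_isSeparated [EMetricSpace X] {ε : ENNReal} (hε : ε ≠ 0)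
    (hsep : ∀ᶠ k in atTop, IsSeparated ε (A k ∩ B))
    (he : ∀ᶠ k in atTop, BijOn (e k) (Iio m) (A k ∩ B))
    (hq : ∀ j, Tendsto (fun k => e k j) atTop (𝓝 (q j))) :
    InjOn q (Iio m) := by
  intro i hi j hj hij
  by_contra hne
  have hlim : ε ≤ edist (q i) (q j) := by
    refine ge_of_tendsto ((hq i).edist (hq j)) ?_
    filter_upwards [hsep, he] with k hk hke
    exact (hk (hke.mapsTo hi) (hke.mapsTo hj) (hke.injOn.ne hi hj hne)).le
  rw [hij, edist_self] at hlim
  exact hε (nonpos_iff_eq_zero.1 hlim)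

lemma tendsto_finsum_mem_kuratowskiLiminf [EMetricSpace X] {M : Type*} [AddCommMonoid M]
    [TopologicalSpace M] [ContinuousAdd M] {f : X → M} (hf : Continuous f)
    (hfB : Function.support f ⊆ interior B) {ε : ENNReal} (hε : ε ≠ 0)
    (hsep : ∀ᶠ k in atTop, IsSeparated ε (A k ∩ B))
    (he : ∀ᶠ k in atTop, BijOn (e k) (Iio m) (A k ∩ B))
    (hq : ∀ j, Tendsto (fun k => e k j) atTop (𝓝 (q j))) :
    Tendsto (fun k => ∑ᶠ x ∈ A k, f x) atTop (𝓝 (∑ᶠ x ∈ kuratowskiLiminf A, f x)) := by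
  have hlim : ∑ᶠ x ∈ kuratowskiLiminf A, f x = ∑ j ∈ Finset.range m, f (q j) := by
    have hqinj := injOn_of_eventually_isSeparated hε hsep he hq
    rw [← finsum_mem_eq_sum_range_of_bijOn hqinj.bijOn_image]
    refine finsum_mem_inter_support_eq f _ _ (Subset.antisymm ?_ ?_)
    · exact fun x hx => ⟨kuratowskiLiminf_inter_interior_subset_image he hq ⟨hx.1, hfB hx.2⟩, hx.2⟩
    · exact inter_subset_inter_left _ (image_subset_kuratowskiLiminf he hq)
  have htrace : ∀ k, ∑ᶠ x ∈ A k, f x = ∑ᶠ x ∈ A k ∩ B, f x := fun k =>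
    finsum_mem_inter_support_eq f _ _ (by
      rw [inter_assoc, inter_eq_right.2 (hfB.trans interior_subset)])
  rw [hlim]
  refine (tendsto_finsetSum _ fun j _ => (hf.tendsto (q j)).comp (hq j)).congr' ?_
  filter_upwards [he] with k hk
  rw [htrace, finsum_mem_eq_sum_range_of_bijOn hk]
  rfl

end Trace

section Psi

variable {d : ℕ} {φ : EuclideanSpace ℝ (Fin d) → ℝ}

lemma Psi_nonneg (hφ : ∀ x, 0 < φ x) (x y : EuclideanSpace ℝ (Fin d)) : 0 ≤ Psi φ x y := by
  unfold Psi
  split_ifs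
  · rfl
  · have := hφ x
    have := hφ y
    positivity

lemma continuousAt_Psi (hφ : Continuous φ) {x y : EuclideanSpace ℝ (Fin d)} (hxy : x ≠ y) :
    ContinuousAt (fun p : EuclideanSpace ℝ (Fin d) × EuclideanSpace ℝ (Fin d) => Psi φ p.1 p.2)
      (x, y) := by
  have hformula : (fun p : EuclideanSpace ℝ (Fin d) × EuclideanSpace ℝ (Fin d) =>
      φ p.1 * φ p.2 * (dist p.1 p.2 + 1) / dist p.1 p.2) =ᶠ[𝓝 (x, y)]
      fun p => Psi φ p.1 p.2 := by
    filter_upwards [(isOpen_ne_fun continuous_fst continuous_snd).mem_nhds hxy] with p hp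
    exact (if_neg hp).symm
  refine ContinuousAt.congr ?_ hformula
  exact (((hφ.comp continuous_fst).mul (hφ.comp continuous_snd)).mul
    (continuous_dist.add continuous_const)).continuousAt.div continuous_dist.continuousAt
    (dist_ne_zero.2 hxy)

lemma ofReal_Psi_le_pairPsi {γ : Set (EuclideanSpace ℝ (Fin d))} {x y : EuclideanSpace ℝ (Fin d)}
    (hx : x ∈ γ) (hy : y ∈ γ) : ENNReal.ofReal (Psi φ x y) ≤ pairPsi φ γ :=
  ENNReal.le_tsum (⟨(x, y), mk_mem_prod hx hy⟩ : (γ ×ˢ γ : Set _))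

lemma pairPsi_le_ofReal_iff (hφ : ∀ x, 0 < φ x) {c : ℝ} (hc : 0 ≤ c)
    {γ : Set (EuclideanSpace ℝ (Fin d))} :
    pairPsi φ γ ≤ ENNReal.ofReal c ↔
      ∀ s : Finset (EuclideanSpace ℝ (Fin d)), ↑s ⊆ γ → ∑ p ∈ s ×ˢ s, Psi φ p.1 p.2 ≤ c := by
  have hsum : ∀ s : Finset (EuclideanSpace ℝ (Fin d)),
      ∑ p ∈ s ×ˢ s, ENNReal.ofReal (Psi φ p.1 p.2) = ENNReal.ofReal (∑ p ∈ s ×ˢ s, Psi φ p.1 p.2) :=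
    fun s => (ENNReal.ofReal_sum_of_nonneg fun p _ => Psi_nonneg hφ _ _).symm
  constructor
  · intro h s hs
    rw [← ENNReal.ofReal_le_ofReal_iff hc, ← hsum]
    have hmem : ∀ p ∈ s ×ˢ s, p ∈ γ ×ˢ γ := fun p hp =>
      ⟨hs (Finset.mem_product.1 hp).1, hs (Finset.mem_product.1 hp).2⟩
    rw [← Finset.sum_subtype_of_mem _ hmem]
    exact (ENNReal.sum_le_tsum _).trans h
  · intro h
    refine ENNReal.summable.tsum_le_of_sum_le fun S => ?_
    let s := S.image (fun p => p.1.1) ∪ S.image (fun p => p.1.2)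
    have hs : ↑s ⊆ γ := by
      intro x hx
      simp only [s, Finset.coe_union, Finset.coe_image, mem_union, mem_image] at hx
      rcases hx with ⟨p, -, rfl⟩ | ⟨p, -, rfl⟩
      exacts [p.2.1, p.2.2]
    have hsub : S.map (Function.Embedding.subtype (· ∈ γ ×ˢ γ)) ⊆ s ×ˢ s := by
      intro p hp
      obtain ⟨p, hpS, rfl⟩ := Finset.mem_map.1 hp
      exact Finset.mem_product.2 ⟨Finset.mem_union_left _ (Finset.mem_image_of_mem _ hpS),
        Finset.mem_union_right _ (Finset.mem_image_of_mem _ hpS)⟩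
    calc ∑ p ∈ S, ENNReal.ofReal (Psi φ p.1.1 p.1.2)
        = ∑ p ∈ S.map (Function.Embedding.subtype (· ∈ γ ×ˢ γ)), ENNReal.ofReal (Psi φ p.1 p.2) :=
          by rw [Finset.sum_map]; rfl
      _ ≤ ∑ p ∈ s ×ˢ s, ENNReal.ofReal (Psi φ p.1 p.2) := Finset.sum_le_sum_of_subset hsub
      _ ≤ ENNReal.ofReal c := by rw [hsum]; exact ENNReal.ofReal_le_ofReal (h s hs)

/-- The pair sum over finitely many limit points is the limit of pair sums over points of `A k`,
because `Ψ_φ` is continuous off the diagonal. -/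
lemma pairPsi_kuratowskiLiminf_le (hφc : Continuous φ) (hφ : ∀ x, 0 < φ x) {c : ℝ} (hc : 0 ≤ c)
    {A : ℕ → Set (EuclideanSpace ℝ (Fin d))} (hA : ∀ k, pairPsi φ (A k) ≤ ENNReal.ofReal c) :
    pairPsi φ (kuratowskiLiminf A) ≤ ENNReal.ofReal c := by
  rw [pairPsi_le_ofReal_iff hφ hc]
  intro s hs
  choose! a haA ha using fun x (hx : x ∈ s) => hs hx
  have hpair : ∀ p ∈ s ×ˢ s, Tendsto (fun k => Psi φ (a p.1 k) (a p.2 k)) atTop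
      (𝓝 (Psi φ p.1 p.2)) := by
    rintro ⟨x, y⟩ hp
    obtain ⟨hx, hy⟩ := Finset.mem_product.1 hp
    by_cases hxy : x = y
    · subst hxy
      simp [Psi]
    · exact (continuousAt_Psi hφc hxy).tendsto.comp ((ha x hx).prodMk_nhds (ha y hy))
  have hinj : ∀ᶠ k in atTop, InjOn (a · k) s := by
    have hne : ∀ p ∈ s ×ˢ s, ∀ᶠ k in atTop, a p.1 k = a p.2 k → p.1 = p.2 := by
      rintro ⟨x, y⟩ hp
      obtain ⟨hx, hy⟩ := Finset.mem_product.1 hp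
      by_cases hxy : x = y
      · exact .of_forall fun _ _ => hxy
      · exact (((ha x hx).prodMk_nhds (ha y hy)).eventually
          ((isOpen_ne_fun continuous_fst continuous_snd).mem_nhds hxy)).mono fun _ hk h =>
            absurd h hk
    filter_upwards [(s ×ˢ s).eventually_all.2 hne] with k hk x hx y hy
    exact hk (x, y) (Finset.mem_product.2 ⟨hx, hy⟩)
  refine le_of_tendsto (tendsto_finsetSum _ hpair) ?_
  filter_upwards [hinj, s.eventually_all.2 haA] with k hk hkA
  have himage : ↑(s.image (a · k)) ⊆ A k := by
    simpa [Set.subset_def] using hkA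
  calc ∑ p ∈ s ×ˢ s, Psi φ (a p.1 k) (a p.2 k)
      = ∑ p ∈ s.image (a · k) ×ˢ s.image (a · k), Psi φ p.1 p.2 := by
        rw [← Finset.prodMap_image_product, Finset.sum_image (Finset.coe_product s s ▸ hk.prodMap hk)]
        rfl
    _ ≤ c := (pairPsi_le_ofReal_iff hφ hc).1 (hA k) _ himage

/-- On `K`, `Ψ_φ(x, y) > m² / |x - y|` with `m = min_K φ > 0`, so `Ψ_φ ≤ c` keeps distinct
points more than `m² / c` apart. -/
lemma exists_isSeparated_inter_of_pairPsi_le (hφc : Continuous φ) (hφ : ∀ x, 0 < φ x) {c : ℝ}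
    (hc : 0 < c) {K : Set (EuclideanSpace ℝ (Fin d))} (hK : IsCompact K) :
    ∃ ε : NNReal, ε ≠ 0 ∧ ∀ γ, pairPsi φ γ ≤ ENNReal.ofReal c → IsSeparated ε (γ ∩ K) := by
  obtain ⟨μ, hμ, hμK⟩ := hK.exists_forall_le' hφc.continuousOn fun x _ => hφ x
  refine ⟨(μ ^ 2 / c).toNNReal, (Real.toNNReal_pos.2 (by positivity)).ne',
    fun γ hγ x hx y hy hxy => ?_⟩
  have hd : 0 < dist x y := dist_pos.2 hxy
  have hΨ : Psi φ x y ≤ c :=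
    (ENNReal.ofReal_le_ofReal_iff hc.le).1 ((ofReal_Psi_le_pairPsi hx.1 hy.1).trans hγ)
  rw [Psi, if_neg hxy, div_le_iff₀ hd] at hΨ
  have hμ2 : μ ^ 2 ≤ φ x * φ y := by
    rw [sq]
    exact mul_le_mul (hμK x hx.2) (hμK y hy.2) hμ.le (hφ x).le
  change ENNReal.ofReal _ < edist x y
  rw [edist_dist, ENNReal.ofReal_lt_ofReal_iff hd, div_lt_iff₀ hc, mul_comm]
  calc μ ^ 2 ≤ φ x * φ y := hμ2
    _ < φ x * φ y * (dist x y + 1) := lt_mul_of_one_lt_right (mul_pos (hφ x) (hφ y)) (by linarith)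
    _ ≤ c * dist x y := hΨ

end Psi

theorem sublevel_set_of_pairPsi_seq_compact_general
    (d : ℕ) (φ : EuclideanSpace ℝ (Fin d) → ℝ) (hφ : IsPhi φ)
    (c : ℝ) (hc : 0 < c)
    (u : ℕ → Set (EuclideanSpace ℝ (Fin d)))
    (hu : ∀ k, IsConfiguration (u k) ∧ pairPsi φ (u k) ≤ ENNReal.ofReal c) :
    ∃ ψ : ℕ → ℕ, StrictMono ψ ∧
      ∃ γ : Set (EuclideanSpace ℝ (Fin d)), IsConfiguration γ ∧
        pairPsi φ γ ≤ ENNReal.ofReal c ∧ VagueTendsto (u ∘ ψ) γ := by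
  obtain ⟨hφc, hφpos, -, -⟩ := hφ
  have hB (n : ℕ) : IsCompact (closedBall (0 : EuclideanSpace ℝ (Fin d)) n) :=
    isCompact_closedBall 0 n
  have hball (n : ℕ) : ball (0 : EuclideanSpace ℝ (Fin d)) n ⊆ interior (closedBall 0 n) :=
    ball_subset_interior_closedBall
  choose ε hε hsep using fun n => exists_isSeparated_inter_of_pairPsi_le hφc hφpos hc (hB n)
  have hsepu (n k : ℕ) : IsSeparated (ε n) (u k ∩ closedBall 0 n) := hsep n _ (hu k).2
  choose N hN using fun n => (hB n).totallyBounded.exists_encard_le_of_isSeparated (hε n)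
  obtain ⟨ψ, hψ, m, e, q, he, hq⟩ := exists_subseq_bijOn_tendsto hB
    (fun n => mem_closedBall_self n.cast_nonneg) fun k n => hN n _ inter_subset_right (hsepu n k)
  refine ⟨ψ, hψ, kuratowskiLiminf (u ∘ ψ), fun K hK => ?_,
    pairPsi_kuratowskiLiminf_le hφc hφpos hc.le fun k => (hu (ψ k)).2, fun f hf hfK => ?_⟩
  · obtain ⟨n, hn⟩ := hK.exists_nat_subset_ball 0
    exact ((finite_Iio _).image _).subset ((inter_subset_inter_right _ (hn.trans (hball n))).trans
      (kuratowskiLiminf_inter_interior_subset_image (he n) (hq n)))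
  · obtain ⟨n, hn⟩ := hfK.isCompact.exists_nat_subset_ball 0
    exact tendsto_finsum_mem_kuratowskiLiminf hf ((subset_tsupport f).trans (hn.trans (hball n)))
      (ENNReal.coe_ne_zero.2 (hε n)) (.of_forall fun k => hsepu n (ψ k)) (he n) (hq n)

/-- The sublevel set `K_c = {γ : ⟨γ × γ, Ψ_φ⟩ ≤ c}` is sequentially compact for vague
convergence. -/
theorem sublevel_set_of_pairPsi_seq_compact
    (d : ℕ) (hd : 1 ≤ d) (φ : EuclideanSpace ℝ (Fin d) → ℝ) (hφ : IsPhi φ)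
    (c : ℝ) (hc : 0 < c)
    (u : ℕ → Set (EuclideanSpace ℝ (Fin d)))
    (hu : ∀ k, IsConfiguration (u k) ∧ pairPsi φ (u k) ≤ ENNReal.ofReal c) :
    ∃ ψ : ℕ → ℕ, StrictMono ψ ∧
      ∃ γ : Set (EuclideanSpace ℝ (Fin d)), IsConfiguration γ ∧
        pairPsi φ γ ≤ ENNReal.ofReal c ∧ VagueTendsto (u ∘ ψ) γ :=
  sublevel_set_of_pairPsi_seq_compact_general d φ hφ c hc u hu

end
end

section
/- Let d ∈ ℕ, d ≥ 1, and let K be a family of configurations over ℝ^d such that for every n ∈ ℕ, sup_{γ ∈ K} ( |γ ∩ B_n(0)| + δ⁻¹(γ, B_n(0)) ) < ∞ (i.e. K is relatively compact in the vague topology). Then there exists φ ∈ Φ such that sup_{γ ∈ K} ⟨γ × γ, Ψ_φ⟩ ≤ 1. -/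
open Filter Topology Metric Set Classical

noncomputable section

/-- `δ⁻¹(γ, B)`: the reciprocal of the minimal distance between distinct points of `γ ∩ B`,
interpreted as `0` (= `sSup ∅` in `ℝ`) when `γ ∩ B` has fewer than two points. -/
def deltaInv {d : ℕ} (γ B : Set (EuclideanSpace ℝ (Fin d))) : ℝ :=
  sSup {r | ∃ x ∈ γ ∩ B, ∃ y ∈ γ ∩ B, x ≠ y ∧ r = 1 / dist x y}

/-! Let `W` be a monotone majorant of the bounds in `hb`, so that the ball of radius `m + 1`
contains at most `W m` points of each `γ ∈ K`, any two of them at distance at least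
`1 / (W m - 1)`. Then `1 + 1 / |x - y| ≤ W ⌊|x|⌋ * W ⌊|y|⌋` for distinct `x, y ∈ γ`, so
`⟨γ × γ, Ψ_φ⟩ ≤ (∑_{x ∈ γ} φ(x) W ⌊|x|⌋)²`. Grouping the points of `γ` by the shells
`⌊|x|⌋ = m`, the sum is at most `∑ₘ W m * 2^{-(m+1)} / W m = 1` as soon as
`φ(x) ≤ 2^{-(m+1)} / (W m)²` on the shell `m`. A continuous positive radial `φ` below this
decreasing step function comes from a partition of unity on `ℝ`. -/

open scoped ENNReal

theorem ENNReal.tsum_set_prod_mul {α β : Type*} (s : Set α) (t : Set β) (f : α → ℝ≥0∞)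
    (g : β → ℝ≥0∞) :
    ∑' p : ↥(s ×ˢ t), f p.1.1 * g p.1.2 = (∑' x : s, f x) * ∑' y : t, g y := by
  rw [← (Equiv.Set.prod s t).symm.tsum_eq]
  change ∑' q : s × t, f q.1 * g q.2 = _
  rw [ENNReal.tsum_prod (f := fun (x : s) (y : t) => f x * g y), ← ENNReal.tsum_mul_right]
  exact tsum_congr fun x => ENNReal.tsum_mul_left

theorem exists_continuous_pos_le {X : Type*} [TopologicalSpace X] [ParacompactSpace X]
    [T2Space X] {b : X → ℝ} (hb : ∀ x, ∃ c > 0, ∀ᶠ y in 𝓝 x, c ≤ b y) :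
    ∃ g : C(X, ℝ), ∀ x, 0 < g x ∧ g x ≤ b x :=
  exists_continuous_forall_mem_convex_of_local_const (fun x => convex_Ioc 0 (b x)) fun x =>
    let ⟨c, hc, hcb⟩ := hb x
    ⟨c, hcb.mono fun _ hy => ⟨hc, hy⟩⟩

theorem exists_continuous_pos_le_nat_floor {a : ℕ → ℝ} (ha : ∀ n, 0 < a n)
    (hanti : Antitone a) (hlim : Tendsto a atTop (𝓝 0)) :
    ∃ g : C(ℝ, ℝ), Tendsto g atTop (𝓝 0) ∧ ∀ t, 0 < g t ∧ g t ≤ a ⌊t⌋₊ := by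
  obtain ⟨g, hg⟩ := exists_continuous_pos_le (b := fun t : ℝ => a ⌊t⌋₊) fun t => by
    refine ⟨a (⌈t⌉₊ + 1), ha _, ?_⟩
    filter_upwards [eventually_lt_nhds (lt_add_one t)] with s hs
    refine hanti (Nat.floor_le_of_le ?_)
    push_cast
    linarith [Nat.le_ceil t]
  exact ⟨g, squeeze_zero (fun t => (hg t).1.le) (fun t => (hg t).2)
    (hlim.comp tendsto_nat_floor_atTop), hg⟩

theorem mem_closedBall_zero_of_floor_norm_le {E : Type*} [SeminormedAddCommGroup E] {x : E}
    {m : ℕ} (hm : ⌊‖x‖⌋₊ ≤ m) : x ∈ closedBall (0 : E) ((m + 1 : ℕ) : ℝ) := by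
  rw [mem_closedBall_zero_iff]
  push_cast
  linarith [Nat.lt_floor_add_one ‖x‖, (Nat.cast_le (α := ℝ)).2 hm]

theorem tsum_le_tsum_encard_closedBall_mul {E : Type*} [SeminormedAddCommGroup E] (γ : Set E)
    (f : E → ℝ≥0∞) (c : ℕ → ℝ≥0∞) (hf : ∀ x ∈ γ, f x ≤ c ⌊‖x‖⌋₊) :
    ∑' x : γ, f x ≤ ∑' m : ℕ, (γ ∩ closedBall 0 ((m + 1 : ℕ) : ℝ)).encard * c m := by
  have hshells : γ = ⋃ m : ℕ, γ ∩ {x | ⌊‖x‖⌋₊ = m} := by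
    ext x; simp
  rw [tsum_congr_set_coe f hshells]
  refine (ENNReal.tsum_iUnion_le_tsum f _).trans (ENNReal.tsum_le_tsum fun m => ?_)
  calc ∑' x : ↥(γ ∩ {x | ⌊‖x‖⌋₊ = m}), f x
      ≤ ∑' _ : ↥(γ ∩ {x | ⌊‖x‖⌋₊ = m}), c m :=
        ENNReal.tsum_le_tsum fun x => (hf x x.2.1).trans_eq (congrArg c x.2.2)
    _ = (γ ∩ {x | ⌊‖x‖⌋₊ = m}).encard * c m := ENNReal.tsum_set_const _ _
    _ ≤ (γ ∩ closedBall 0 ((m + 1 : ℕ) : ℝ)).encard * c m := by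
        gcongr
        rintro x rfl
        exact mem_closedBall_zero_of_floor_norm_le le_rfl

theorem exists_monotone_one_add_le (f : ℕ → ℝ) :
    ∃ W : ℕ → ℝ, Monotone W ∧ ∀ m, 1 ≤ W m ∧ 1 + f m ≤ W m := by
  refine ⟨partialSups fun k => 1 + |f k|, partialSups_monotone _, fun m => ?_⟩
  have hle := le_partialSups (fun k => 1 + |f k|) m
  constructor <;> linarith [abs_nonneg (f m), le_abs_self (f m)]

variable {d : ℕ}

theorem deltaInv_nonneg (γ B : Set (EuclideanSpace ℝ (Fin d))) : 0 ≤ deltaInv γ B :=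
  Real.sSup_nonneg fun _ ⟨x, _, y, _, _, hr⟩ => hr ▸ by positivity

theorem one_div_dist_le_deltaInv {γ B : Set (EuclideanSpace ℝ (Fin d))} (h : (γ ∩ B).Finite)
    {x y : EuclideanSpace ℝ (Fin d)} (hx : x ∈ γ ∩ B) (hy : y ∈ γ ∩ B) (hxy : x ≠ y) :
    1 / dist x y ≤ deltaInv γ B := by
  refine le_csSup (((h.prod h).image fun p => 1 / dist p.1 p.2).subset ?_).bddAbove
    ⟨x, hx, y, hy, hxy, rfl⟩
  rintro r ⟨x, hx, y, hy, -, rfl⟩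
  exact ⟨(x, y), ⟨hx, hy⟩, rfl⟩

theorem one_add_one_div_dist_le_mul {γ : Set (EuclideanSpace ℝ (Fin d))}
    (hγ : IsConfiguration γ) {W : ℕ → ℝ} (hW1 : ∀ m, 1 ≤ W m)
    (hW : ∀ m : ℕ, 1 + deltaInv γ (closedBall 0 ((m + 1 : ℕ) : ℝ)) ≤ W m)
    {x y : EuclideanSpace ℝ (Fin d)} (hx : x ∈ γ) (hy : y ∈ γ) (hxy : x ≠ y) :
    1 + 1 / dist x y ≤ W ⌊‖x‖⌋₊ * W ⌊‖y‖⌋₊ := by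
  have hδ := one_div_dist_le_deltaInv (hγ _ (isCompact_closedBall _ _))
    ⟨hx, mem_closedBall_zero_of_floor_norm_le (le_max_left _ _)⟩
    ⟨hy, mem_closedBall_zero_of_floor_norm_le (le_max_right _ _)⟩ hxy
  have hdist : 1 + 1 / dist x y ≤ W (max ⌊‖x‖⌋₊ ⌊‖y‖⌋₊) := by
    linarith [hW (max ⌊‖x‖⌋₊ ⌊‖y‖⌋₊)]
  rcases max_choice ⌊‖x‖⌋₊ ⌊‖y‖⌋₊ with hm | hm <;> rw [hm] at hdist
  · exact hdist.trans (le_mul_of_one_le_right (zero_le_one.trans (hW1 _)) (hW1 _))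
  · exact hdist.trans (le_mul_of_one_le_left (zero_le_one.trans (hW1 _)) (hW1 _))

theorem Psi_of_ne (φ : EuclideanSpace ℝ (Fin d) → ℝ) {x y : EuclideanSpace ℝ (Fin d)}
    (hxy : x ≠ y) : Psi φ x y = φ x * φ y * (1 + 1 / dist x y) := by
  have : dist x y ≠ 0 := dist_ne_zero.2 hxy
  rw [Psi, if_neg hxy]
  field_simp

theorem pairPsi_le_sq {φ w : EuclideanSpace ℝ (Fin d) → ℝ} {γ : Set (EuclideanSpace ℝ (Fin d))}
    (hφ : ∀ x, 0 ≤ φ x) (hw : ∀ x ∈ γ, 0 ≤ w x)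
    (hΨ : ∀ x ∈ γ, ∀ y ∈ γ, x ≠ y → 1 + 1 / dist x y ≤ w x * w y) :
    pairPsi φ γ ≤ (∑' x : γ, ENNReal.ofReal (φ x * w x)) ^ 2 := by
  rw [sq, ← ENNReal.tsum_set_prod_mul γ γ (fun x => ENNReal.ofReal (φ x * w x))
    (fun y => ENNReal.ofReal (φ y * w y)), pairPsi]
  refine ENNReal.tsum_le_tsum fun ⟨(x, y), hx, hy⟩ => ?_
  rw [← ENNReal.ofReal_mul (mul_nonneg (hφ x) (hw x hx))]
  refine ENNReal.ofReal_le_ofReal ?_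
  by_cases hxy : x = y
  · simp only [Psi, if_pos hxy]
    exact mul_nonneg (mul_nonneg (hφ x) (hw x hx)) (mul_nonneg (hφ y) (hw y hy))
  · calc Psi φ x y = φ x * φ y * (1 + 1 / dist x y) := Psi_of_ne φ hxy
      _ ≤ φ x * φ y * (w x * w y) :=
        mul_le_mul_of_nonneg_left (hΨ x hx y hy hxy) (mul_nonneg (hφ x) (hφ y))
      _ = φ x * w x * (φ y * w y) := by ring

theorem tsum_ofReal_le_one {γ : Set (EuclideanSpace ℝ (Fin d))} (hγ : IsConfiguration γ)
    {W : ℕ → ℝ} (hW : ∀ m, 0 < W m)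
    (hcount : ∀ m : ℕ, ((γ ∩ closedBall 0 ((m + 1 : ℕ) : ℝ)).ncard : ℝ) ≤ W m)
    {h : EuclideanSpace ℝ (Fin d) → ℝ} (hh : ∀ x, h x ≤ 2⁻¹ ^ (⌊‖x‖⌋₊ + 1) / W ⌊‖x‖⌋₊) :
    ∑' x : γ, ENNReal.ofReal (h x) ≤ 1 := by
  have hencard (m : ℕ) : ((γ ∩ closedBall 0 ((m + 1 : ℕ) : ℝ)).encard : ℝ≥0∞)
      ≤ ENNReal.ofReal (W m) := by
    rw [← (hγ _ (isCompact_closedBall _ _)).cast_ncard_eq, ENat.toENNReal_coe,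
      ← ENNReal.ofReal_natCast]
    exact ENNReal.ofReal_le_ofReal (hcount m)
  calc ∑' x : γ, ENNReal.ofReal (h x)
      ≤ ∑' m : ℕ, ((γ ∩ closedBall 0 ((m + 1 : ℕ) : ℝ)).encard : ℝ≥0∞)
          * ENNReal.ofReal (2⁻¹ ^ (m + 1) / W m) :=
        tsum_le_tsum_encard_closedBall_mul γ (fun x => ENNReal.ofReal (h x))
          (fun m => ENNReal.ofReal (2⁻¹ ^ (m + 1) / W m)) fun x _ =>
            ENNReal.ofReal_le_ofReal (hh x)
    _ ≤ ∑' m : ℕ, ENNReal.ofReal (W m) * ENNReal.ofReal (2⁻¹ ^ (m + 1) / W m) :=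
        ENNReal.tsum_le_tsum fun m => mul_le_mul_left (hencard m) _
    _ = ∑' m : ℕ, 2⁻¹ ^ (m + 1) := by
        refine tsum_congr fun m => ?_
        rw [← ENNReal.ofReal_mul (hW m).le, mul_div_cancel₀ _ (hW m).ne', ENNReal.ofReal_pow
          (by norm_num), ENNReal.ofReal_inv_of_pos two_pos, ENNReal.ofReal_ofNat]
    _ = 1 := by
        rw [ENNReal.tsum_geometric_add_one, ENNReal.one_sub_inv_two, inv_inv,
          ENNReal.inv_mul_cancel two_ne_zero ENNReal.ofNat_ne_top]

theorem isPhi_comp_norm {g : ℝ → ℝ} (hg : Continuous g) (hpos : ∀ t, 0 < g t)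
    (hlim : Tendsto g atTop (𝓝 0)) : IsPhi fun x : EuclideanSpace ℝ (Fin d) => g ‖x‖ := by
  refine ⟨hg.comp continuous_norm, fun x => hpos ‖x‖, fun x y hxy => congrArg g hxy,
    fun ε hε => ?_⟩
  obtain ⟨R, hR⟩ := eventually_atTop.1 (hlim.eventually (gt_mem_nhds hε))
  exact ⟨R, fun x hx => hR ‖x‖ hx⟩

theorem pairPsi_le_one {γ : Set (EuclideanSpace ℝ (Fin d))} (hγ : IsConfiguration γ)
    {W : ℕ → ℝ} (hW1 : ∀ m, 1 ≤ W m)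
    (hcount : ∀ m : ℕ, ((γ ∩ closedBall 0 ((m + 1 : ℕ) : ℝ)).ncard : ℝ) ≤ W m)
    (hδ : ∀ m : ℕ, 1 + deltaInv γ (closedBall 0 ((m + 1 : ℕ) : ℝ)) ≤ W m)
    {φ : EuclideanSpace ℝ (Fin d) → ℝ} (hφ0 : ∀ x, 0 ≤ φ x)
    (hφ : ∀ x, φ x ≤ 2⁻¹ ^ (⌊‖x‖⌋₊ + 1) / W ⌊‖x‖⌋₊ ^ 2) :
    pairPsi φ γ ≤ 1 := by
  have hWpos (m : ℕ) : 0 < W m := zero_lt_one.trans_le (hW1 m)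
  refine (pairPsi_le_sq hφ0 (fun x _ => (hWpos _).le) fun x hx y hy hxy =>
    one_add_one_div_dist_le_mul hγ hW1 hδ hx hy hxy).trans (pow_le_one' ?_ 2)
  refine tsum_ofReal_le_one hγ hWpos hcount (h := fun x => φ x * W ⌊‖x‖⌋₊) fun x => ?_
  calc φ x * W ⌊‖x‖⌋₊ ≤ 2⁻¹ ^ (⌊‖x‖⌋₊ + 1) / W ⌊‖x‖⌋₊ ^ 2 * W ⌊‖x‖⌋₊ :=
        mul_le_mul_of_nonneg_right (hφ x) (hWpos _).le
    _ = 2⁻¹ ^ (⌊‖x‖⌋₊ + 1) / W ⌊‖x‖⌋₊ := by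
        field_simp [(hWpos ⌊‖x‖⌋₊).ne']

theorem exists_phi_pairPsi_le_one_of_relatively_compact_general
    (d : ℕ) (K : Set (Set (EuclideanSpace ℝ (Fin d))))
    (hK : ∀ γ ∈ K, IsConfiguration γ)
    (hb : ∀ n : ℕ, ∃ C : ℝ, ∀ γ ∈ K,
      ((γ ∩ closedBall (0 : EuclideanSpace ℝ (Fin d)) n).ncard : ℝ)
        + deltaInv γ (closedBall (0 : EuclideanSpace ℝ (Fin d)) n) ≤ C) :
    ∃ φ : EuclideanSpace ℝ (Fin d) → ℝ, IsPhi φ ∧ ∀ γ ∈ K, pairPsi φ γ ≤ 1 := by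
  choose C hC using hb
  obtain ⟨W, hWmono, hW⟩ := exists_monotone_one_add_le fun m => C (m + 1)
  have hWpos (m : ℕ) : 0 < W m := zero_lt_one.trans_le (hW m).1
  set a : ℕ → ℝ := fun m => 2⁻¹ ^ (m + 1) / W m ^ 2
  have ha_pos (m : ℕ) : 0 < a m := div_pos (by positivity) (pow_pos (hWpos m) 2)
  have ha_anti : Antitone a := fun m n hmn =>
    div_le_div₀ (by positivity) (pow_le_pow_of_le_one (by norm_num) (by norm_num) (by omega))
      (pow_pos (hWpos m) 2) (pow_le_pow_left₀ (hWpos m).le (hWmono hmn) 2)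
  have ha_lim : Tendsto a atTop (𝓝 0) :=
    squeeze_zero (fun m => (ha_pos m).le)
      (fun m => div_le_self (by positivity) (one_le_pow₀ (hW m).1))
      ((tendsto_pow_atTop_nhds_zero_of_lt_one (by norm_num) (by norm_num)).comp
        (tendsto_add_atTop_nat 1))
  obtain ⟨g, hg_lim, hg⟩ := exists_continuous_pos_le_nat_floor ha_pos ha_anti ha_lim
  refine ⟨fun x => g ‖x‖, isPhi_comp_norm g.continuous (fun t => (hg t).1) hg_lim,
    fun γ hγ => pairPsi_le_one (hK γ hγ) (fun m => (hW m).1) (fun m => ?count) (fun m => ?sep)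
      (fun x => (hg ‖x‖).1.le) fun x => (hg ‖x‖).2⟩
  case count =>
    linarith [hC (m + 1) γ hγ, (hW m).2, deltaInv_nonneg γ (closedBall 0 ((m + 1 : ℕ) : ℝ))]
  case sep =>
    linarith [hC (m + 1) γ hγ, (hW m).2,
      Nat.cast_nonneg (α := ℝ) (γ ∩ closedBall 0 ((m + 1 : ℕ) : ℝ)).ncard]

/-- For every relatively compact family `K` of configurations there is `φ ∈ Φ`
with `sup_{γ ∈ K} ⟨γ × γ, Ψ_φ⟩ ≤ 1`. -/
theorem exists_phi_pairPsi_le_one_of_relatively_compact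
    (d : ℕ) (hd : 1 ≤ d) (K : Set (Set (EuclideanSpace ℝ (Fin d))))
    (hK : ∀ γ ∈ K, IsConfiguration γ)
    (hb : ∀ n : ℕ, ∃ C : ℝ, ∀ γ ∈ K,
      ((γ ∩ closedBall (0 : EuclideanSpace ℝ (Fin d)) n).ncard : ℝ)
        + deltaInv γ (closedBall (0 : EuclideanSpace ℝ (Fin d)) n) ≤ C) :
    ∃ φ : EuclideanSpace ℝ (Fin d) → ℝ, IsPhi φ ∧ ∀ γ ∈ K, pairPsi φ γ ≤ 1 :=
  exists_phi_pairPsi_le_one_of_relatively_compact_general d K hK hb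
end
end

section
/- Let d ∈ ℕ, d ≥ 1. The metric space (Γ_0(ℝ^d), dist) is a Polish space: it is separable, and its topology is induced by some complete metric (even though the metric dist itself is not complete). -/
open Filter Topology Metric Set

noncomputable section

/-- `d_Eucl(ζ, η)`: the infimum over bijections `e : ζ → η` of
`(∑_{x ∈ ζ} |x − e(x)|²)^{1/2}`. -/
def dEucl {d : ℕ} (ζ η : Set (EuclideanSpace ℝ (Fin d))) : ℝ :=
  sInf {r | ∃ e : EuclideanSpace ℝ (Fin d) → EuclideanSpace ℝ (Fin d),
    Set.BijOn e ζ η ∧ r = Real.sqrt (∑ᶠ x ∈ ζ, ‖x - e x‖ ^ 2)}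

/-- The metric `dist` on finite configurations: `min(1, d_Eucl)` when the cardinalities
agree, and `1` otherwise. -/
def confDist {d : ℕ} (ζ η : Set (EuclideanSpace ℝ (Fin d))) : ℝ :=
  if ζ.ncard = η.ncard then min 1 (dEucl ζ η) else 1

/-- The space `Γ₀(ℝ^d)` of finite configurations. -/
def Gamma0 (d : ℕ) := {s : Set (EuclideanSpace ℝ (Fin d)) // s.Finite}

/-!
The metric `dist` fails to be complete only because points of a configuration may merge in the
limit. Adding `|s(ζ)⁻¹ - s(η)⁻¹|` to it, where `s(ζ)` is the least distance between distinct
points of `ζ` capped at `1`, does not change the topology since `s` is continuous and positive.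
Along a Cauchy sequence for the new metric `s` stays bounded below, so the configurations are
uniformly separated; the close matchings of late terms with a fixed one are then forced, the
matched points form uniformly Cauchy sequences in `ℝ^d`, and their limits form the limit
configuration. Configurations with points in a countable dense subset of `ℝ^d` are dense.
-/

theorem Real.sqrt_sum_add_sq_le {ι : Type*} (s : Finset ι) (f g : ι → ℝ) :
    √(∑ i ∈ s, (f i + g i) ^ 2) ≤ √(∑ i ∈ s, f i ^ 2) + √(∑ i ∈ s, g i ^ 2) := by
  simpa [Real.sqrt_eq_rpow, Real.rpow_two, sq_abs] using Real.Lp_add_le s f g one_le_two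

theorem Set.BijOn.exists_leftInvOn_bijOn {α β : Type*} [Nonempty α] {s : Set α}
    {t : Set β} {f : α → β} (hf : BijOn f s t) : ∃ g, BijOn g t s ∧ ∀ x ∈ s, g (f x) = x :=
  ⟨Function.invFunOn f s, hf.symm hf.invOn_invFunOn.symm, fun _ hx => hf.invOn_invFunOn.1 hx⟩

theorem min_one_add_le {a b : ℝ} (ha : 0 ≤ a) (hb : 0 ≤ b) :
    min 1 (a + b) ≤ min 1 a + min 1 b := by
  rcases min_cases 1 a with h | h <;> rcases min_cases 1 b with h' | h' <;>
    linarith [min_le_left 1 (a + b), min_le_right 1 (a + b)]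

section SepScale

variable {X : Type*} [MetricSpace X] {s t : Set X} {x y : X}

/-- The smaller of `1` and the least distance between two distinct points of `s`; the `1` makes
it positive on finite sets with fewer than two points. -/
def sepScale (s : Set X) : ℝ :=
  sInf (insert 1 ((fun p : X × X => dist p.1 p.2) '' s.offDiag))

theorem bddBelow_sepScale_set (s : Set X) :
    BddBelow (insert 1 ((fun p : X × X => dist p.1 p.2) '' s.offDiag)) :=
  ⟨0, forall_mem_insert.2 ⟨zero_le_one, forall_mem_image.2 fun _ _ => dist_nonneg⟩⟩

theorem sepScale_le_one (s : Set X) : sepScale s ≤ 1 :=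
  csInf_le (bddBelow_sepScale_set s) (mem_insert _ _)

theorem sepScale_le_dist (hx : x ∈ s) (hy : y ∈ s) (hxy : x ≠ y) : sepScale s ≤ dist x y :=
  csInf_le (bddBelow_sepScale_set s) (mem_insert_of_mem _ ⟨(x, y), ⟨hx, hy, hxy⟩, rfl⟩)

theorem sepScale_pos (hs : s.Finite) : 0 < sepScale s := by
  have hfin : (insert 1 ((fun p : X × X => dist p.1 p.2) '' s.offDiag)).Finite :=
    (hs.offDiag.image _).insert 1
  rcases (insert_nonempty _ _).csInf_mem hfin with h | ⟨p, ⟨-, -, hp⟩, h⟩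
  · rw [sepScale, h]; exact one_pos
  · rw [sepScale, ← h]; exact dist_pos.2 hp

theorem eq_of_dist_lt_sepScale (hx : x ∈ s) (hy : y ∈ s) (h : dist x y < sepScale s) :
    x = y := by
  by_contra hxy
  exact (sepScale_le_dist hx hy hxy).not_gt h

theorem injOn_of_dist_lt_sepScale {f : X → X} (hf : ∀ x ∈ s, dist (f x) x < sepScale s / 2) :
    InjOn f s := by
  intro x hx y hy hxy
  refine eq_of_dist_lt_sepScale hx hy ?_
  calc dist x y ≤ dist (f x) x + dist (f y) y := by
        simpa [hxy, dist_comm] using dist_triangle x (f y) y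
    _ < sepScale s := by linarith [hf x hx, hf y hy]

theorem sepScale_sub_le_of_bijOn {e : X → X} {δ : ℝ} (he : BijOn e s t) (hδ : 0 ≤ δ)
    (hd : ∀ x ∈ s, dist x (e x) ≤ δ) : sepScale s - 2 * δ ≤ sepScale t := by
  refine le_csInf (insert_nonempty _ _)
    (forall_mem_insert.2 ⟨by linarith [sepScale_le_one s], ?_⟩)
  rintro _ ⟨⟨_, _⟩, ⟨hy, hy', hne⟩, rfl⟩
  obtain ⟨x, hx, rfl⟩ := he.surjOn hy
  obtain ⟨x', hx', rfl⟩ := he.surjOn hy'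
  have := sepScale_le_dist hx hx' (ne_of_apply_ne e hne)
  have := dist_triangle4 x (e x) (e x') x'
  linarith [hd x hx, hd x' hx', dist_comm x' (e x')]

theorem abs_sepScale_sub_le_of_bijOn {e : X → X} {δ : ℝ} (he : BijOn e s t) (hδ : 0 ≤ δ)
    (hd : ∀ x ∈ s, dist x (e x) ≤ δ) : |sepScale s - sepScale t| ≤ 2 * δ := by
  rcases isEmpty_or_nonempty X with hX | hX
  · simp [Subsingleton.elim s t, hδ]
  obtain ⟨g, hg, hgi⟩ := he.exists_leftInvOn_bijOn
  have hgd : ∀ y ∈ t, dist y (g y) ≤ δ := by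
    rw [← he.image_eq]
    rintro _ ⟨x, hx, rfl⟩
    rw [hgi x hx, dist_comm]
    exact hd x hx
  rw [abs_sub_le_iff]
  constructor
  · linarith [sepScale_sub_le_of_bijOn he hδ hd]
  · linarith [sepScale_sub_le_of_bijOn hg hδ hgd]

end SepScale

section GraphDist

variable {X Y : Type*} [MetricSpace X] [PseudoMetricSpace Y] (f : X → Y)

def graphDist (x y : X) : ℝ := dist x y + dist (f x) (f y)

theorem graphDist_nonneg (x y : X) : 0 ≤ graphDist f x y :=
  add_nonneg dist_nonneg dist_nonneg

theorem graphDist_eq_zero {x y : X} : graphDist f x y = 0 ↔ x = y := by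
  refine ⟨fun h => dist_eq_zero.1 ((add_eq_zero_iff_of_nonneg dist_nonneg dist_nonneg).1 h).1,
    fun h => by simp [graphDist, h]⟩

theorem graphDist_comm (x y : X) : graphDist f x y = graphDist f y x := by
  simp only [graphDist, dist_comm]

theorem graphDist_triangle (x y z : X) :
    graphDist f x z ≤ graphDist f x y + graphDist f y z := by
  simp only [graphDist]
  linarith [dist_triangle x y z, dist_triangle (f x) (f y) (f z)]

theorem dist_le_graphDist (x y : X) : dist x y ≤ graphDist f x y :=
  le_add_of_nonneg_right dist_nonneg

theorem cauchySeq_of_graphDist {u : ℕ → X}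
    (hu : ∀ ε > (0 : ℝ), ∃ N : ℕ, ∀ m ≥ N, ∀ k ≥ N, graphDist f (u m) (u k) < ε) :
    CauchySeq u ∧ CauchySeq (f ∘ u) := by
  refine ⟨Metric.cauchySeq_iff.2 fun ε hε => ?_, Metric.cauchySeq_iff.2 fun ε hε => ?_⟩ <;>
    obtain ⟨N, hN⟩ := hu ε hε <;>
    refine ⟨N, fun m hm k hk => lt_of_le_of_lt ?_ (hN m hm k hk)⟩
  exacts [le_add_of_nonneg_right dist_nonneg, le_add_of_nonneg_left dist_nonneg]

variable {f}

theorem ContinuousAt.exists_graphDist_lt {x : X} (hf : ContinuousAt f x) {ε : ℝ} (hε : 0 < ε) :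
    ∃ δ > 0, ∀ y, dist x y < δ → graphDist f x y < ε := by
  obtain ⟨δ, hδ, hfδ⟩ := Metric.continuousAt_iff.1 hf (ε / 2) (half_pos hε)
  refine ⟨min δ (ε / 2), lt_min hδ (half_pos hε), fun y hy => ?_⟩
  have := hfδ (dist_comm x y ▸ hy.trans_le (min_le_left _ _))
  unfold graphDist
  linarith [dist_comm (f x) (f y), min_le_right δ (ε / 2)]

theorem Filter.Tendsto.graphDist_tendsto_zero {ι : Type*} {p : Filter ι} {u : ι → X} {x : X}
    (hf : ContinuousAt f x) (hu : Tendsto u p (𝓝 x)) :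
    Tendsto (fun i => graphDist f (u i) x) p (𝓝 0) := by
  simpa [graphDist] using (tendsto_iff_dist_tendsto_zero.1 hu).add
    (tendsto_iff_dist_tendsto_zero.1 (hf.tendsto.comp hu))

end GraphDist

local notation "ℝ^" d:max => EuclideanSpace ℝ (Fin d)

section Matching

variable {d : ℕ} {ζ ξ η : Set (ℝ^d)} {e f : ℝ^d → ℝ^d}

def matchCost (ζ : Set (ℝ^d)) (e : ℝ^d → ℝ^d) : ℝ :=
  √(∑ᶠ x ∈ ζ, ‖x - e x‖ ^ 2)

theorem dist_le_matchCost (hζ : ζ.Finite) {x} (hx : x ∈ ζ) :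
    dist x (e x) ≤ matchCost ζ e := by
  rw [dist_eq_norm, matchCost, finsum_mem_eq_finite_toFinset_sum _ hζ]
  exact Real.le_sqrt_of_sq_le
    (Finset.single_le_sum (fun y _ => sq_nonneg ‖y - e y‖) (hζ.mem_toFinset.2 hx))

theorem matchCost_le (hζ : ζ.Finite) {r : ℝ} (hr : 0 ≤ r) (h : ∀ x ∈ ζ, dist x (e x) ≤ r) :
    matchCost ζ e ≤ √ζ.ncard * r := by
  rw [matchCost, finsum_mem_eq_finite_toFinset_sum _ hζ, ← Real.sqrt_sq hr, ← Real.sqrt_mul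
    (Nat.cast_nonneg _), Set.ncard_eq_toFinset_card ζ hζ, ← nsmul_eq_mul]
  refine Real.sqrt_le_sqrt (Finset.sum_le_card_nsmul _ _ _ fun x hx => ?_)
  rw [← dist_eq_norm]
  exact pow_le_pow_left₀ dist_nonneg (h x (hζ.mem_toFinset.1 hx)) 2

theorem matchCost_comp_le (hζ : ζ.Finite) (he : BijOn e ζ ξ) :
    matchCost ζ (f ∘ e) ≤ matchCost ζ e + matchCost ξ f := by
  have hξ : matchCost ξ f = √(∑ x ∈ hζ.toFinset, ‖e x - f (e x)‖ ^ 2) := by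
    rw [matchCost, ← he.image_eq, finsum_mem_image he.injOn,
      finsum_mem_eq_finite_toFinset_sum _ hζ]
  rw [hξ, matchCost, matchCost, finsum_mem_eq_finite_toFinset_sum _ hζ,
    finsum_mem_eq_finite_toFinset_sum _ hζ]
  refine le_trans (Real.sqrt_le_sqrt (Finset.sum_le_sum fun x _ => ?_))
    (Real.sqrt_sum_add_sq_le _ _ _)
  refine pow_le_pow_left₀ (norm_nonneg _) ?_ 2
  simpa using norm_sub_le_norm_sub_add_norm_sub x (e x) (f (e x))

theorem matchCost_of_leftInvOn (he : BijOn e ζ η) (hf : ∀ x ∈ ζ, f (e x) = x) :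
    matchCost η f = matchCost ζ e := by
  rw [matchCost, ← he.image_eq, finsum_mem_image he.injOn, matchCost]
  exact congrArg Real.sqrt (finsum_mem_congr rfl fun x hx => by rw [hf x hx, norm_sub_rev])

theorem dEucl_le_matchCost (he : BijOn e ζ η) : dEucl ζ η ≤ matchCost ζ e :=
  csInf_le ⟨0, fun _ ⟨_, _, hr⟩ => hr ▸ Real.sqrt_nonneg _⟩ ⟨e, he, rfl⟩

theorem dEucl_nonneg (ζ η : Set (ℝ^d)) : 0 ≤ dEucl ζ η :=
  Real.sInf_nonneg fun _ ⟨_, _, hr⟩ => hr ▸ Real.sqrt_nonneg _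

theorem dEucl_self (ζ : Set (ℝ^d)) : dEucl ζ ζ = 0 :=
  le_antisymm ((dEucl_le_matchCost (bijOn_id ζ)).trans_eq (by simp [matchCost]))
    (dEucl_nonneg ζ ζ)

theorem dEucl_comm (ζ η : Set (ℝ^d)) : dEucl ζ η = dEucl η ζ := by
  suffices h : ∀ ζ η : Set (ℝ^d), {r | ∃ e, BijOn e ζ η ∧ r = matchCost ζ e} ⊆
      {r | ∃ e, BijOn e η ζ ∧ r = matchCost η e} from
    congrArg sInf ((h ζ η).antisymm (h η ζ))
  rintro ζ η _ ⟨e, he, rfl⟩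
  obtain ⟨g, hg, hgi⟩ := he.exists_leftInvOn_bijOn
  exact ⟨g, hg, (matchCost_of_leftInvOn he hgi).symm⟩

theorem exists_bijOn_matchCost_lt (hζ : ζ.Finite) (hη : η.Finite) (hcard : ζ.ncard = η.ncard)
    {δ : ℝ} (h : dEucl ζ η < δ) : ∃ e, BijOn e ζ η ∧ matchCost ζ e < δ := by
  obtain ⟨e, he⟩ := hζ.exists_bijOn_of_encard_eq
    (hζ.cast_ncard_eq.symm.trans (by rw [hcard, hη.cast_ncard_eq]))
  obtain ⟨_, ⟨e, he, rfl⟩, hlt⟩ := exists_lt_of_csInf_lt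
    (s := {r | ∃ e, BijOn e ζ η ∧ r = matchCost ζ e}) ⟨_, e, he, rfl⟩ h
  exact ⟨e, he, hlt⟩

theorem dEucl_triangle (hζ : ζ.Finite) (hξ : ξ.Finite) (hη : η.Finite)
    (hζξ : ζ.ncard = ξ.ncard) (hξη : ξ.ncard = η.ncard) :
    dEucl ζ η ≤ dEucl ζ ξ + dEucl ξ η := by
  refine le_of_forall_pos_lt_add fun ε hε => ?_
  obtain ⟨e, he, hec⟩ :=
    exists_bijOn_matchCost_lt hζ hξ hζξ (lt_add_of_pos_right _ (half_pos hε))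
  obtain ⟨f, hf, hfc⟩ :=
    exists_bijOn_matchCost_lt hξ hη hξη (lt_add_of_pos_right _ (half_pos hε))
  calc dEucl ζ η ≤ matchCost ζ (f ∘ e) := dEucl_le_matchCost (hf.comp he)
    _ ≤ matchCost ζ e + matchCost ξ f := matchCost_comp_le hζ he
    _ < dEucl ζ ξ + dEucl ξ η + ε := by linarith

end Matching

section ConfDist

variable {d : ℕ} {ζ ξ η s : Set (ℝ^d)} {e f g : ℝ^d → ℝ^d} {δ : ℝ}

theorem confDist_nonneg (ζ η : Set (ℝ^d)) : 0 ≤ confDist ζ η := by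
  unfold confDist; split_ifs
  exacts [le_min zero_le_one (dEucl_nonneg ζ η), zero_le_one]

theorem confDist_le_one (ζ η : Set (ℝ^d)) : confDist ζ η ≤ 1 := by
  unfold confDist; split_ifs
  exacts [min_le_left _ _, le_rfl]

theorem ncard_eq_of_confDist_lt_one (h : confDist ζ η < 1) : ζ.ncard = η.ncard := by
  by_contra hne
  simp [confDist, hne] at h

theorem exists_bijOn_matchCost_lt_of_confDist_lt (hζ : ζ.Finite) (hη : η.Finite) (hδ : δ ≤ 1)
    (h : confDist ζ η < δ) : ∃ e, BijOn e ζ η ∧ matchCost ζ e < δ := by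
  have hcard := ncard_eq_of_confDist_lt_one (h.trans_le hδ)
  rw [confDist, if_pos hcard, min_lt_iff] at h
  exact exists_bijOn_matchCost_lt hζ hη hcard (h.resolve_left hδ.not_gt)

theorem exists_bijOn_dist_lt (hζ : ζ.Finite) (hη : η.Finite) (hδ : δ ≤ 1)
    (h : confDist ζ η < δ) : ∃ e, BijOn e ζ η ∧ ∀ x ∈ ζ, dist x (e x) < δ := by
  obtain ⟨e, he, hc⟩ := exists_bijOn_matchCost_lt_of_confDist_lt hζ hη hδ h
  exact ⟨e, he, fun x hx => (dist_le_matchCost hζ hx).trans_lt hc⟩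

theorem confDist_le_matchCost (he : BijOn e ζ η) : confDist ζ η ≤ matchCost ζ e := by
  rw [confDist, if_pos (he.image_eq ▸ (he.injOn.ncard_image).symm)]
  exact (min_le_right _ _).trans (dEucl_le_matchCost he)

theorem confDist_image_image_le (hs : s.Finite) (hf : InjOn f s) (hg : InjOn g s) {r : ℝ}
    (hr : 0 ≤ r) (h : ∀ x ∈ s, dist (f x) (g x) ≤ r) :
    confDist (f '' s) (g '' s) ≤ √s.ncard * r := by
  have : Nonempty (ℝ^d) := ⟨0⟩
  obtain ⟨f', hf', hf'i⟩ := hf.bijOn_image.exists_leftInvOn_bijOn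
  have he : BijOn (g ∘ f') (f '' s) (g '' s) := hg.bijOn_image.comp hf'
  refine (confDist_le_matchCost he).trans ?_
  rw [← hf.ncard_image]
  refine matchCost_le (hs.image f) hr ?_
  rintro _ ⟨x, hx, rfl⟩
  simpa [hf'i x hx] using h x hx

theorem confDist_self (ζ : Set (ℝ^d)) : confDist ζ ζ = 0 := by
  simp [confDist, dEucl_self]

theorem confDist_comm (ζ η : Set (ℝ^d)) : confDist ζ η = confDist η ζ := by
  simp only [confDist, dEucl_comm ζ η, eq_comm]

theorem confDist_triangle (hζ : ζ.Finite) (hξ : ξ.Finite) (hη : η.Finite) :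
    confDist ζ η ≤ confDist ζ ξ + confDist ξ η := by
  by_cases hζξ : ζ.ncard = ξ.ncard
  · by_cases hξη : ξ.ncard = η.ncard
    · simp only [confDist, if_pos hζξ, if_pos hξη, if_pos (hζξ.trans hξη)]
      exact (min_le_min_left 1 (dEucl_triangle hζ hξ hη hζξ hξη)).trans
        (min_one_add_le (dEucl_nonneg ζ ξ) (dEucl_nonneg ξ η))
    · have : confDist ξ η = 1 := if_neg hξη
      linarith [confDist_le_one ζ η, confDist_nonneg ζ ξ]
  · have : confDist ζ ξ = 1 := if_neg hζξ
    linarith [confDist_le_one ζ η, confDist_nonneg ξ η]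

theorem eq_of_confDist_eq_zero (hζ : ζ.Finite) (hη : η.Finite) (h : confDist ζ η = 0) :
    ζ = η := by
  have hcard := ncard_eq_of_confDist_lt_one (h ▸ one_pos)
  refine eq_of_subset_of_ncard_le (fun x hx => ?_) hcard.ge hη
  refine hη.isClosed.closure_subset (Metric.mem_closure_iff.2 fun ε hε => ?_)
  obtain ⟨e, he, hd⟩ := exists_bijOn_dist_lt hζ hη (min_le_left 1 ε) (h ▸ lt_min one_pos hε)
  exact ⟨e x, he.mapsTo hx, (hd x hx).trans_le (min_le_right _ _)⟩

end ConfDist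

instance {d : ℕ} : MetricSpace (Gamma0 d) where
  dist ζ η := confDist ζ.1 η.1
  dist_self ζ := confDist_self ζ.1
  dist_comm ζ η := confDist_comm ζ.1 η.1
  dist_triangle ζ ξ η := confDist_triangle ζ.2 ξ.2 η.2
  eq_of_dist_eq_zero {ζ η} h := Subtype.ext (eq_of_confDist_eq_zero ζ.2 η.2 h)

namespace Gamma0

variable {d : ℕ}

theorem continuous_sepScale : Continuous fun ζ : Gamma0 d => sepScale ζ.1 := by
  refine Metric.continuous_iff.2 fun ζ ε hε => ⟨min 1 (ε / 3), by positivity, fun η h => ?_⟩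
  obtain ⟨e, he, hd⟩ := exists_bijOn_dist_lt η.2 ζ.2 (min_le_left _ _) h
  rw [Real.dist_eq]
  calc |sepScale η.1 - sepScale ζ.1| ≤ 2 * min 1 (ε / 3) :=
        abs_sepScale_sub_le_of_bijOn he (by positivity) fun x hx => (hd x hx).le
    _ < ε := by linarith [min_le_right 1 (ε / 3)]

theorem dense_setOf_subset {S : Set (ℝ^d)} (hS : Dense S) :
    Dense {γ : Gamma0 d | γ.1 ⊆ S} := by
  refine Metric.dense_iff.2 fun ζ ε hε => ?_
  obtain ⟨r, hr, hrε⟩ := exists_pos_mul_lt hε √ζ.1.ncard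
  have hr' : 0 < min r (sepScale ζ.1 / 3) := lt_min hr (by linarith [sepScale_pos ζ.2])
  choose q hqS hq using fun x => hS.exists_dist_lt x hr'
  have hinj : InjOn q ζ.1 := injOn_of_dist_lt_sepScale fun x _ => by
    linarith [dist_comm x (q x), hq x, min_le_right r (sepScale ζ.1 / 3), sepScale_pos ζ.2]
  have hdist := confDist_image_image_le ζ.2 hinj (injOn_id ζ.1) hr.le fun x _ =>
    (dist_comm (q x) x ▸ hq x).le.trans (min_le_left _ _)
  rw [image_id] at hdist
  exact ⟨⟨q '' ζ.1, ζ.2.image q⟩, mem_ball.2 (hdist.trans_lt hrε),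
    image_subset_iff.2 fun x _ => hqS x⟩

instance : TopologicalSpace.SeparableSpace (Gamma0 d) := by
  obtain ⟨S, hSc, hS⟩ := TopologicalSpace.exists_countable_dense (ℝ^d)
  refine ⟨{γ | γ.1 ⊆ S}, ?_, dense_setOf_subset hS⟩
  refine ((countable_ofPred_finite_subset hSc).preimage Subtype.val_injective).mono ?_
  exact fun γ hγ => ⟨γ.2, hγ⟩

theorem cauchySeq_tendsto_of_le_sepScale_of_dist_lt {u : ℕ → Gamma0 d} (hu : CauchySeq u)
    {c : ℝ} (hc : ∀ m, c ≤ sepScale (u m).1) (hbase : ∀ m, dist (u 0) (u m) < min 1 (c / 3)) :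
    ∃ l, Tendsto u atTop (𝓝 l) := by
  set δ := min 1 (c / 3)
  have hδ : 0 < δ := dist_nonneg.trans_lt (hbase 0)
  have hδc : δ ≤ c / 3 := min_le_right _ _
  set ζ₀ := (u 0).1
  choose e he hed using fun m =>
    exists_bijOn_dist_lt (u 0).2 (u m).2 (min_le_left _ _) (hbase m)
  -- A close matching `f` of `u m` with `u k` sends `e m x` to `e k x`: both lie in the
  -- `c`-separated set `u k`, less than `ε + 2δ ≤ c` apart.
  have hstep : ∀ m k ε, ε ≤ δ → dist (u m) (u k) < ε →
      ∀ x ∈ ζ₀, dist (e m x) (e k x) < ε := by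
    intro m k ε hεδ h x hx
    obtain ⟨f, hf, hfd⟩ := exists_bijOn_dist_lt (u m).2 (u k).2 (hεδ.trans (min_le_left _ _)) h
    have hfx : f (e m x) = e k x := by
      refine eq_of_dist_lt_sepScale (hf.mapsTo ((he m).mapsTo hx)) ((he k).mapsTo hx) ?_
      have := dist_triangle4 (f (e m x)) (e m x) x (e k x)
      linarith [hc k, hfd _ ((he m).mapsTo hx), hed m x hx, hed k x hx, dist_comm (e m x) x,
        dist_comm (f (e m x)) (e m x)]
    exact hfx ▸ hfd _ ((he m).mapsTo hx)
  have hunif : UniformCauchySeqOn e atTop ζ₀ := by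
    refine Metric.uniformCauchySeqOn_iff.2 fun ε hε => ?_
    obtain ⟨N, hN⟩ := Metric.cauchySeq_iff.1 hu (min ε δ) (lt_min hε hδ)
    exact ⟨N, fun m hm k hk x hx =>
      (hstep m k _ (min_le_right _ _) (hN m hm k hk) x hx).trans_le (min_le_left _ _)⟩
  set z := fun x => limUnder atTop fun m => e m x
  have hz : TendstoUniformlyOn e z atTop ζ₀ :=
    hunif.tendstoUniformlyOn_of_tendsto fun x hx => (hunif.cauchySeq hx).tendsto_limUnder
  obtain ⟨m, hm⟩ := (Metric.tendstoUniformlyOn_iff.1 hz (c / 6) (by linarith)).exists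
  have hzinj : InjOn z ζ₀ := injOn_of_dist_lt_sepScale fun x hx => by
    linarith [dist_triangle (z x) (e m x) x, hm x hx, hed m x hx, dist_comm x (e m x), hc 0]
  refine ⟨⟨z '' ζ₀, (u 0).2.image z⟩, Metric.tendsto_nhds.2 fun ε hε => ?_⟩
  obtain ⟨r, hr, hrε⟩ := exists_pos_mul_lt hε √ζ₀.ncard
  filter_upwards [Metric.tendstoUniformlyOn_iff.1 hz r hr] with m hm
  change confDist (u m).1 (z '' ζ₀) < ε
  rw [← (he m).image_eq]
  exact (confDist_image_image_le (u 0).2 (he m).injOn hzinj hr.le fun x hx =>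
    (dist_comm (z x) (e m x) ▸ hm x hx).le).trans_lt hrε

theorem cauchySeq_tendsto_of_le_sepScale {u : ℕ → Gamma0 d} (hu : CauchySeq u) {c : ℝ}
    (hc : 0 < c) (hsep : ∀ m, c ≤ sepScale (u m).1) : ∃ l, Tendsto u atTop (𝓝 l) := by
  obtain ⟨N, hN⟩ := Metric.cauchySeq_iff'.1 hu (min 1 (c / 3)) (by positivity)
  obtain ⟨l, hl⟩ := cauchySeq_tendsto_of_le_sepScale_of_dist_lt (u := fun m => u (m + N))
    (hu.comp_tendsto (tendsto_add_atTop_nat N)) (fun m => hsep _)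
    (fun m => by simpa [dist_comm] using hN (m + N) (by omega))
  exact ⟨l, (tendsto_add_atTop_iff_nat N).1 hl⟩

theorem exists_pos_le_sepScale {u : ℕ → Gamma0 d}
    (hu : CauchySeq fun m => (sepScale (u m).1)⁻¹) : ∃ c > 0, ∀ m, c ≤ sepScale (u m).1 := by
  obtain ⟨R, hR, hRu⟩ := cauchySeq_bdd hu
  have h0 := sepScale_pos (u 0).2
  refine ⟨((sepScale (u 0).1)⁻¹ + R)⁻¹, by positivity, fun m => ?_⟩
  rw [inv_le_comm₀ (by positivity) (sepScale_pos (u m).2)]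
  have := hRu m 0
  rw [Real.dist_eq] at this
  linarith [le_abs_self ((sepScale (u m).1)⁻¹ - (sepScale (u 0).1)⁻¹)]

end Gamma0

theorem gamma0_polish_general (d : ℕ) :
    (∃ D : Set (Gamma0 d), D.Countable ∧
      ∀ ζ : Gamma0 d, ∀ ε > (0 : ℝ), ∃ η ∈ D, confDist ζ.1 η.1 < ε) ∧
    ∃ ρ : Gamma0 d → Gamma0 d → ℝ,
      (∀ ζ η, 0 ≤ ρ ζ η) ∧
      (∀ ζ η, ρ ζ η = 0 ↔ ζ = η) ∧
      (∀ ζ η, ρ ζ η = ρ η ζ) ∧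
      (∀ ζ ξ η, ρ ζ η ≤ ρ ζ ξ + ρ ξ η) ∧
      -- `ρ` induces the same topology as `dist`:
      (∀ ζ : Gamma0 d, ∀ ε > (0 : ℝ), ∃ δ > (0 : ℝ),
        ∀ η : Gamma0 d, confDist ζ.1 η.1 < δ → ρ ζ η < ε) ∧
      (∀ ζ : Gamma0 d, ∀ ε > (0 : ℝ), ∃ δ > (0 : ℝ),
        ∀ η : Gamma0 d, ρ ζ η < δ → confDist ζ.1 η.1 < ε) ∧
      -- `ρ` is complete:
      (∀ u : ℕ → Gamma0 d,
        (∀ ε > (0 : ℝ), ∃ N : ℕ, ∀ m ≥ N, ∀ k ≥ N, ρ (u m) (u k) < ε) →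
        ∃ l : Gamma0 d, Tendsto (fun m => ρ (u m) l) atTop (𝓝 0)) := by
  obtain ⟨D, hDc, hD⟩ := TopologicalSpace.exists_countable_dense (Gamma0 d)
  set f : Gamma0 d → ℝ := fun ζ => (sepScale ζ.1)⁻¹
  have hf : Continuous f := Gamma0.continuous_sepScale.inv₀ fun ζ => (sepScale_pos ζ.2).ne'
  refine ⟨⟨D, hDc, fun ζ ε hε => hD.exists_dist_lt ζ hε⟩, graphDist f, graphDist_nonneg f,
    fun ζ η => graphDist_eq_zero f, graphDist_comm f, graphDist_triangle f,
    fun ζ ε hε => hf.continuousAt.exists_graphDist_lt hε,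
    fun ζ ε hε => ⟨ε, hε, fun η h => (dist_le_graphDist f ζ η).trans_lt h⟩, fun u hu => ?_⟩
  obtain ⟨hu, hfu⟩ := cauchySeq_of_graphDist f hu
  obtain ⟨c, hc, hsep⟩ := Gamma0.exists_pos_le_sepScale hfu
  obtain ⟨l, hl⟩ := Gamma0.cauchySeq_tendsto_of_le_sepScale hu hc hsep
  exact ⟨l, hl.graphDist_tendsto_zero hf.continuousAt⟩

/-- `(Γ₀(ℝ^d), dist)` is a Polish space: it is separable, and there is a complete metric `ρ`
on `Γ₀(ℝ^d)` inducing the same topology as `dist`. -/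
theorem gamma0_polish (d : ℕ) (hd : 1 ≤ d) :
    (∃ D : Set (Gamma0 d), D.Countable ∧
      ∀ ζ : Gamma0 d, ∀ ε > (0 : ℝ), ∃ η ∈ D, confDist ζ.1 η.1 < ε) ∧
    ∃ ρ : Gamma0 d → Gamma0 d → ℝ,
      (∀ ζ η, 0 ≤ ρ ζ η) ∧
      (∀ ζ η, ρ ζ η = 0 ↔ ζ = η) ∧
      (∀ ζ η, ρ ζ η = ρ η ζ) ∧
      (∀ ζ ξ η, ρ ζ η ≤ ρ ζ ξ + ρ ξ η) ∧
      -- `ρ` induces the same topology as `dist`: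
      (∀ ζ : Gamma0 d, ∀ ε > (0 : ℝ), ∃ δ > (0 : ℝ),
        ∀ η : Gamma0 d, confDist ζ.1 η.1 < δ → ρ ζ η < ε) ∧
      (∀ ζ : Gamma0 d, ∀ ε > (0 : ℝ), ∃ δ > (0 : ℝ),
        ∀ η : Gamma0 d, ρ ζ η < δ → confDist ζ.1 η.1 < ε) ∧
      -- `ρ` is complete:
      (∀ u : ℕ → Gamma0 d,
        (∀ ε > (0 : ℝ), ∃ N : ℕ, ∀ m ≥ N, ∀ k ≥ N, ρ (u m) (u k) < ε) →
        ∃ l : Gamma0 d, Tendsto (fun m => ρ (u m) l) atTop (𝓝 0)) :=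
  gamma0_polish_general d

end
end
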